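/- Optimality condition: assuming ρ0(s) > 0 for all s, a policy π maximizes η over all policies if and only if the policy advantage A*_π := max_{π'} Σ_s ρ_π(s) Σ_a π'(a|s) A_π(s,a) equals 0. -/

import Mathlib

open scoped BigOperators

section MDPdefs

variable (S A : Type) [Fintype S] [Fintype A]

structure MDP where
  P : S → A → S → ℝ
  r : S → A → ℝ
  ρ0 : S → ℝ
  γ : ℝ

variable {S A}

def IsPolicy (π : S → A → ℝ) : Prop :=
  (∀ s a, 0 ≤ π s a) ∧ ∀ s, ∑ a, π s a = 1

def MDP.Valid (M : MDP S A) : Prop :=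
  (∀ s a s', 0 ≤ M.P s a s') ∧ (∀ s a, ∑ s', M.P s a s' = 1) ∧
  (∀ s, 0 ≤ M.ρ0 s) ∧ (∑ s, M.ρ0 s = 1) ∧ 0 < M.γ ∧ M.γ < 1

/-- Distribution of the state at time `t` when the initial state follows `ρ0`
and the trajectory follows policy `π`. -/
noncomputable def MDP.stateDist (M : MDP S A) (π : S → A → ℝ) : ℕ → S → ℝ
  | 0 => M.ρ0
  | (t+1) => fun s' => ∑ s, ∑ a, M.stateDist π t s * π s a * M.P s a s'

/-- The unnormalized discounted visitation frequency `ρ_π`. -/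
noncomputable def MDP.ρvisit (M : MDP S A) (π : S → A → ℝ) (s : S) : ℝ :=
  ∑' t : ℕ, M.γ ^ t * M.stateDist π t s

/-- The total expected discounted reward `η(π)`. -/
noncomputable def MDP.η (M : MDP S A) (π : S → A → ℝ) : ℝ :=
  ∑' t : ℕ, M.γ ^ t * ∑ s, M.stateDist π t s * ∑ a, π s a * M.r s a

/-- Distribution of the state at time `t` starting deterministically from `s0`. -/
noncomputable def MDP.distFrom [DecidableEq S] (M : MDP S A) (π : S → A → ℝ) (s0 : S) :
    ℕ → S → ℝ
  | 0 => fun s => if s = s0 then 1 else 0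
  | (t+1) => fun s' => ∑ s, ∑ a, M.distFrom π s0 t s * π s a * M.P s a s'

/-- The state value function `V_π`. -/
noncomputable def MDP.V [DecidableEq S] (M : MDP S A) (π : S → A → ℝ) (s0 : S) : ℝ :=
  ∑' t : ℕ, M.γ ^ t * ∑ s, M.distFrom π s0 t s * ∑ a, π s a * M.r s a

/-- The action value function `Q_π`. -/
noncomputable def MDP.Q [DecidableEq S] (M : MDP S A) (π : S → A → ℝ) (s : S) (a : A) : ℝ :=
  M.r s a + M.γ * ∑ s', M.P s a s' * M.V π s'

/-- The advantage function `A_π`. -/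
noncomputable def MDP.Adv [DecidableEq S] (M : MDP S A) (π : S → A → ℝ) (s : S) (a : A) : ℝ :=
  M.Q π s a - M.V π s

/-!
By the performance difference lemma `η π' - η π = ∑ₛ ρ_π'(s) ∑ₐ π'(a|s) A_π(s,a)` and the identity
`∑ₐ π(a|s) A_π(s,a) = 0`, both conditions are equivalent to `A_π ≤ 0` everywhere: if
`A_π(s,a) > 0`, the policy that agrees with `π` except that it plays `a` at `s` has positive policy
advantage and improves `η`, because visitation frequencies satisfy `ρ ≥ ρ0 > 0`.
Value functions and visitation frequencies are the discounted resolvent `∑ γᵗ Tᵗ = (1 - γ T)⁻¹`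
of the transition matrix `T` of the policy applied to the reward and to `ρ0`, which turns both
identities into matrix algebra.
-/

open Matrix

section MatrixSeries

variable {ι m n R : Type*} [Fintype n] [TopologicalSpace R]

theorem HasSum.matrix_mulVec [NonUnitalNonAssocSemiring R] [IsTopologicalSemiring R]
    {f : ι → Matrix m n R} {a : Matrix m n R} (hf : HasSum f a) (v : n → R) :
    HasSum (fun i => f i *ᵥ v) (a *ᵥ v) :=
  hf.map (mulVec.addMonoidHomLeft v) (continuous_id.matrix_mulVec continuous_const)

theorem HasSum.matrix_vecMul [CommSemiring R] [IsTopologicalSemiring R]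
    {f : ι → Matrix n m R} {a : Matrix n m R} (hf : HasSum f a) (v : n → R) :
    HasSum (fun i => v ᵥ* f i) (v ᵥ* a) := by
  simpa only [mulVec_transpose] using hf.matrix_transpose.matrix_mulVec v

end MatrixSeries

section Policies

variable {S A : Type} [Fintype A] [DecidableEq S]

theorem IsPolicy.update_single [DecidableEq A] {π : S → A → ℝ} (hπ : IsPolicy π) (s₀ : S)
    (a₀ : A) : IsPolicy (Function.update π s₀ (Pi.single a₀ 1)) := by
  constructor
  · intro s a
    rcases eq_or_ne s s₀ with rfl | hs
    · rw [Function.update_self, Pi.single_apply]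
      split_ifs <;> norm_num
    · rw [Function.update_of_ne hs]
      exact hπ.1 s a
  · intro s
    rcases eq_or_ne s s₀ with rfl | hs
    · simp
    · rw [Function.update_of_ne hs]
      exact hπ.2 s

theorem sum_mul_sum_update_single [Fintype S] [DecidableEq A] {π f : S → A → ℝ}
    (hf : ∀ s, ∑ a, π s a * f s a = 0) (w : S → ℝ) (s₀ : S) (a₀ : A) :
    ∑ s, w s * ∑ a, Function.update π s₀ (Pi.single a₀ 1) s a * f s a = w s₀ * f s₀ a₀ := by
  rw [Finset.sum_eq_single s₀ (fun s _ hs => by rw [Function.update_of_ne hs, hf, mul_zero])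
    (by simp)]
  simp [Pi.single_apply]

end Policies

theorem sum_mul_sum_nonpos {S A : Type} [Fintype S] [Fintype A] {w : S → ℝ} {π f : S → A → ℝ}
    (hw : ∀ s, 0 ≤ w s) (hπ : ∀ s a, 0 ≤ π s a) (hf : ∀ s a, f s a ≤ 0) :
    ∑ s, w s * ∑ a, π s a * f s a ≤ 0 :=
  Finset.sum_nonpos fun s _ => mul_nonpos_of_nonneg_of_nonpos (hw s)
    (Finset.sum_nonpos fun a _ => mul_nonpos_of_nonneg_of_nonpos (hπ s a) (hf s a))

namespace MDP

variable {S A : Type} [Fintype S] [Fintype A]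

def transition (M : MDP S A) (π : S → A → ℝ) : Matrix S S ℝ :=
  Matrix.of fun s s' => ∑ a, π s a * M.P s a s'

def expectedReward (M : MDP S A) (π : S → A → ℝ) (s : S) : ℝ :=
  ∑ a, π s a * M.r s a

variable [DecidableEq S] {M : MDP S A} {π : S → A → ℝ}

theorem transition_mem_rowStochastic (hM : M.Valid) (hπ : IsPolicy π) :
    M.transition π ∈ rowStochastic ℝ S := by
  refine mem_rowStochastic_iff_sum.2
    ⟨fun s s' => Finset.sum_nonneg fun a _ => mul_nonneg (hπ.1 s a) (hM.1 s a s'), fun s => ?_⟩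
  simp only [transition, of_apply]
  rw [Finset.sum_comm]
  simp_rw [← Finset.mul_sum, hM.2.1, mul_one, hπ.2]

theorem stateDist_eq_vecMul (t : ℕ) : M.stateDist π t = M.ρ0 ᵥ* M.transition π ^ t := by
  induction t with
  | zero => simp [stateDist]
  | succ t ih =>
    ext s'
    rw [pow_succ, ← vecMul_vecMul, ← ih]
    simp only [stateDist, vecMul, dotProduct, transition, of_apply, Finset.mul_sum, mul_assoc]

theorem distFrom_eq_pow_apply (s₀ : S) (t : ℕ) (s : S) :
    M.distFrom π s₀ t s = (M.transition π ^ t) s₀ s := by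
  induction t generalizing s with
  | zero => simp [distFrom, one_apply, eq_comm]
  | succ t ih =>
    rw [pow_succ, mul_apply]
    simp only [distFrom, ih, transition, of_apply, Finset.mul_sum, mul_assoc]

theorem stateDist_nonneg (hM : M.Valid) (hπ : IsPolicy π) (t : ℕ) (s : S) :
    0 ≤ M.stateDist π t s := by
  rw [stateDist_eq_vecMul]
  exact nonneg_vecMul_of_mem_rowStochastic
    (pow_mem (transition_mem_rowStochastic hM hπ) t) hM.2.2.1 s

noncomputable def resolvent (M : MDP S A) (π : S → A → ℝ) : Matrix S S ℝ :=
  ∑' t : ℕ, (M.γ • M.transition π) ^ t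

theorem summable_smul_transition_pow (hM : M.Valid) (hπ : IsPolicy π) :
    Summable fun t : ℕ => (M.γ • M.transition π) ^ t := by
  obtain ⟨hγ0, hγ1⟩ := hM.2.2.2.2
  have hT := fun t => pow_mem (transition_mem_rowStochastic hM hπ) t
  refine Pi.summable.2 fun i => Pi.summable.2 fun j => ?_
  refine (summable_geometric_of_lt_one hγ0.le hγ1).of_nonneg_of_le (fun t => ?_) (fun t => ?_)
    <;> simp only [smul_pow, Matrix.smul_apply, smul_eq_mul]
  · exact mul_nonneg (pow_nonneg hγ0.le t) (nonneg_of_mem_rowStochastic (hT t))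
  · exact mul_le_of_le_one_right (pow_nonneg hγ0.le t) (le_one_of_mem_rowStochastic (hT t))

theorem hasSum_resolvent (hM : M.Valid) (hπ : IsPolicy π) :
    HasSum (fun t : ℕ => (M.γ • M.transition π) ^ t) (M.resolvent π) :=
  (summable_smul_transition_pow hM hπ).hasSum

theorem one_sub_mul_resolvent (hM : M.Valid) (hπ : IsPolicy π) :
    (1 - M.γ • M.transition π) * M.resolvent π = 1 :=
  (summable_smul_transition_pow hM hπ).one_sub_mul_tsum_pow

theorem resolvent_mul_one_sub (hM : M.Valid) (hπ : IsPolicy π) :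
    M.resolvent π * (1 - M.γ • M.transition π) = 1 :=
  (summable_smul_transition_pow hM hπ).tsum_pow_mul_one_sub

theorem hasSum_ρvisit (hM : M.Valid) (hπ : IsPolicy π) (s : S) :
    HasSum (fun t => M.γ ^ t * M.stateDist π t s) ((M.ρ0 ᵥ* M.resolvent π) s) := by
  refine (Pi.hasSum.1 ((hasSum_resolvent hM hπ).matrix_vecMul M.ρ0) s).congr_fun fun t => ?_
  rw [smul_pow, vecMul_smul, stateDist_eq_vecMul]
  rfl

theorem ρvisit_eq_vecMul_resolvent (hM : M.Valid) (hπ : IsPolicy π) :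
    M.ρvisit π = M.ρ0 ᵥ* M.resolvent π :=
  funext fun s => (hasSum_ρvisit hM hπ s).tsum_eq

theorem V_eq_resolvent_mulVec (hM : M.Valid) (hπ : IsPolicy π) :
    M.V π = M.resolvent π *ᵥ M.expectedReward π := by
  funext s₀
  refine Eq.trans (tsum_congr fun t => ?_)
    (Pi.hasSum.1 ((hasSum_resolvent hM hπ).matrix_mulVec (M.expectedReward π)) s₀).tsum_eq
  rw [smul_pow, smul_mulVec, Pi.smul_apply, smul_eq_mul]
  simp only [distFrom_eq_pow_apply, mulVec, dotProduct, expectedReward]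

theorem η_eq_ρvisit_dotProduct (hM : M.Valid) (hπ : IsPolicy π) :
    M.η π = M.ρvisit π ⬝ᵥ M.expectedReward π := by
  rw [ρvisit_eq_vecMul_resolvent hM hπ]
  refine Eq.trans (tsum_congr fun t => ?_)
    (hasSum_sum fun s _ => (hasSum_ρvisit hM hπ s).mul_right (M.expectedReward π s)).tsum_eq
  simp only [Finset.mul_sum, expectedReward, mul_assoc]

theorem η_eq_ρ0_dotProduct_V (hM : M.Valid) (hπ : IsPolicy π) : M.η π = M.ρ0 ⬝ᵥ M.V π := by
  rw [η_eq_ρvisit_dotProduct hM hπ, ρvisit_eq_vecMul_resolvent hM hπ, V_eq_resolvent_mulVec hM hπ,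
    dotProduct_mulVec]

theorem ρvisit_vecMul_one_sub (hM : M.Valid) (hπ : IsPolicy π) :
    M.ρvisit π ᵥ* (1 - M.γ • M.transition π) = M.ρ0 := by
  rw [ρvisit_eq_vecMul_resolvent hM hπ, vecMul_vecMul, resolvent_mul_one_sub hM hπ, vecMul_one]

theorem one_sub_mulVec_V (hM : M.Valid) (hπ : IsPolicy π) :
    (1 - M.γ • M.transition π) *ᵥ M.V π = M.expectedReward π := by
  rw [V_eq_resolvent_mulVec hM hπ, mulVec_mulVec, one_sub_mul_resolvent hM hπ, one_mulVec]

theorem sum_mul_Adv {π' : S → A → ℝ} (hπ' : ∀ s, ∑ a, π' s a = 1) (s : S) :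
    ∑ a, π' s a * M.Adv π s a =
      (M.expectedReward π' - (1 - M.γ • M.transition π') *ᵥ M.V π : S → ℝ) s := by
  simp only [Adv, Q, sub_mulVec, one_mulVec, smul_mulVec, Pi.sub_apply, Pi.smul_apply,
    smul_eq_mul, mulVec, dotProduct, transition, of_apply, expectedReward, mul_sub, mul_add,
    Finset.sum_sub_distrib, Finset.sum_add_distrib, ← Finset.sum_mul, hπ', one_mul,
    Finset.mul_sum]
  rw [Finset.sum_comm]
  simp only [Finset.sum_mul, Finset.mul_sum, mul_left_comm _ M.γ, mul_assoc]
  ring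

theorem sum_policy_mul_Adv_self (hM : M.Valid) (hπ : IsPolicy π) (s : S) :
    ∑ a, π s a * M.Adv π s a = 0 := by
  rw [sum_mul_Adv hπ.2, one_sub_mulVec_V hM hπ, sub_self, Pi.zero_apply]

theorem performance_difference {π' : S → A → ℝ} (hM : M.Valid) (hπ : IsPolicy π)
    (hπ' : IsPolicy π') :
    M.η π' - M.η π = ∑ s, M.ρvisit π' s * ∑ a, π' s a * M.Adv π s a := by
  simp_rw [sum_mul_Adv hπ'.2]
  change _ = M.ρvisit π' ⬝ᵥ _
  rw [dotProduct_sub, dotProduct_mulVec, ρvisit_vecMul_one_sub hM hπ',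
    ← η_eq_ρ0_dotProduct_V hM hπ, ← η_eq_ρvisit_dotProduct hM hπ']

theorem ρ0_le_ρvisit (hM : M.Valid) (hπ : IsPolicy π) (s : S) : M.ρ0 s ≤ M.ρvisit π s := by
  rw [ρvisit_eq_vecMul_resolvent hM hπ]
  simpa [stateDist] using le_hasSum (hasSum_ρvisit hM hπ s) 0 fun t _ =>
    mul_nonneg (pow_nonneg hM.2.2.2.2.1.le t) (stateDist_nonneg hM hπ t s)

theorem ρvisit_pos (hM : M.Valid) (hρ0 : ∀ s, 0 < M.ρ0 s) (hπ : IsPolicy π) (s : S) :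
    0 < M.ρvisit π s :=
  (hρ0 s).trans_le (ρ0_le_ρvisit hM hπ s)

theorem forall_η_le_iff_Adv_nonpos (hM : M.Valid) (hρ0 : ∀ s, 0 < M.ρ0 s) (hπ : IsPolicy π) :
    (∀ π', IsPolicy π' → M.η π' ≤ M.η π) ↔ ∀ s a, M.Adv π s a ≤ 0 := by
  classical
  refine ⟨fun hopt s a => ?_, fun hAdv π' hπ' => ?_⟩
  · have hπ' := hπ.update_single s a
    have h := sub_nonpos.2 (hopt _ hπ')
    rw [performance_difference hM hπ hπ',
      sum_mul_sum_update_single (sum_policy_mul_Adv_self hM hπ)] at h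
    exact nonpos_of_mul_nonpos_right h (ρvisit_pos hM hρ0 hπ' s)
  · rw [← sub_nonpos, performance_difference hM hπ hπ']
    exact sum_mul_sum_nonpos (fun s => (ρvisit_pos hM hρ0 hπ' s).le) hπ'.1 hAdv

theorem isGreatest_zero_iff_Adv_nonpos (hM : M.Valid) (hρ0 : ∀ s, 0 < M.ρ0 s)
    (hπ : IsPolicy π) :
    IsGreatest {x : ℝ | ∃ π', IsPolicy π' ∧
        x = ∑ s, M.ρvisit π s * ∑ a, π' s a * M.Adv π s a} 0 ↔
      ∀ s a, M.Adv π s a ≤ 0 := by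
  classical
  refine ⟨fun ⟨_, hub⟩ s a => ?_, fun hAdv => ⟨⟨π, hπ, ?_⟩, ?_⟩⟩
  · have h := hub ⟨_, hπ.update_single s a, rfl⟩
    rw [sum_mul_sum_update_single (sum_policy_mul_Adv_self hM hπ)] at h
    exact nonpos_of_mul_nonpos_right h (ρvisit_pos hM hρ0 hπ s)
  · simp [sum_policy_mul_Adv_self hM hπ]
  · rintro _ ⟨π', hπ', rfl⟩
    exact sum_mul_sum_nonpos (fun s => (ρvisit_pos hM hρ0 hπ s).le) hπ'.1 hAdv

end MDP

/-- Optimality condition: assuming `ρ0(s) > 0` for all `s`, a policy `π`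
maximizes `η` over all policies iff the policy advantage
`A*_π = max_{π'} Σ_s ρ_π(s) Σ_a π'(a|s) A_π(s,a)` equals `0`. -/
theorem stmt4 {S A : Type} [Fintype S] [Fintype A] [DecidableEq S]
    (M : MDP S A) (hM : M.Valid) (hρ0 : ∀ s, 0 < M.ρ0 s)
    (π : S → A → ℝ) (hπ : IsPolicy π) :
    (∀ π', IsPolicy π' → M.η π' ≤ M.η π) ↔
      IsGreatest {x : ℝ | ∃ π', IsPolicy π' ∧
        x = ∑ s, M.ρvisit π s * ∑ a, π' s a * M.Adv π s a} 0 := by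
  rw [MDP.forall_η_le_iff_Adv_nonpos hM hρ0 hπ, MDP.isGreatest_zero_iff_Adv_nonpos hM hρ0 hπ]
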